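/- arXiv:2009.03389 — 6 statements merged into one kernel-verified Lean document; each statement's English description precedes it below -/
import Mathlib

section
/- Let R be a commutative ring and 𝔽 a filter of ideals in R such that R is 𝔽-h-local. Then for every 𝔽-torsion R-module N, the natural map N → ∏_𝔪 N_𝔪, whose components are the localization maps at the maximal ideals 𝔪 ∈ 𝔽, factors through the submodule ⊕_𝔪 N_𝔪 ⊆ ∏_𝔪 N_𝔪 and induces an R-module isomorphism N ≅ ⊕_𝔪 N_𝔪. Conversely, if 𝔽 is a filter of ideals in R such that every 𝔽-torsion R-module N is isomorphic as an R-module to ⊕_𝔪 N_𝔪 (direct sum over the maximal ideals 𝔪 ∈ 𝔽), then R is 𝔽-h-local. -/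
universe u

open CategoryTheory

noncomputable section

/-- `Ext^n_R(M, N)`, as an `R`-module, computed via the derived-functor `Ext`
bifunctor on the category of `R`-modules. -/
def extM (R : Type u) [CommRing R] (M N : Type u) [AddCommGroup M] [Module R M]
    [AddCommGroup N] [Module R N] (n : ℕ) : ModuleCat.{u} R :=
  ((_root_.Ext R (ModuleCat.{u} R) n).obj (Opposite.op (ModuleCat.of R M))).obj (ModuleCat.of R N)

/-- Contravariant functoriality of `Ext` in the first variable (pullback along `f`). -/
def extPull (R : Type u) [CommRing R] {M M' N : Type u} [AddCommGroup M] [Module R M]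
    [AddCommGroup M'] [Module R M'] [AddCommGroup N] [Module R N]
    (f : M' →ₗ[R] M) (n : ℕ) : extM R M N n →ₗ[R] extM R M' N n :=
  (((_root_.Ext R (ModuleCat.{u} R) n).map (ModuleCat.ofHom f).op).app (ModuleCat.of R N)).hom

/-- Covariant functoriality of `Ext` in the second variable (pushforward along `g`). -/
def extPush (R : Type u) [CommRing R] {M N N' : Type u} [AddCommGroup M] [Module R M]
    [AddCommGroup N] [Module R N] [AddCommGroup N'] [Module R N']
    (g : N →ₗ[R] N') (n : ℕ) : extM R M N n →ₗ[R] extM R M N' n :=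
  (((_root_.Ext R (ModuleCat.{u} R) n).obj (Opposite.op (ModuleCat.of R M))).map
    (ModuleCat.ofHom g)).hom

/-- An `R`-module `C` is a `t`-contramodule if `Hom_R(R[t⁻¹], C) = 0` and
`Ext¹_R(R[t⁻¹], C) = 0`, where `R[t⁻¹]` is the localization of `R` at the powers of `t`. -/
def IsTContra (R : Type u) [CommRing R] (t : R) (C : Type u) [AddCommGroup C]
    [Module R C] : Prop :=
  (∀ f : Localization.Away t →ₗ[R] C, f = 0) ∧
    Subsingleton (extM R (Localization.Away t) C 1)

/-- An `R`-module `C` is an `I`-contramodule if it is a `t`-contramodule for every `t ∈ I`. -/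
def IsIdealContra (R : Type u) [CommRing R] (I : Ideal R) (C : Type u) [AddCommGroup C]
    [Module R C] : Prop :=
  ∀ t ∈ I, IsTContra R t C

/-- A commutative ring is semilocal if it has only finitely many maximal ideals. -/
def IsSemilocal (T : Type u) [CommRing T] : Prop :=
  {I : Ideal T | I.IsMaximal}.Finite

/-- A commutative ring has Krull dimension zero if every prime ideal is maximal. -/
def IsKrullDimZero (T : Type u) [CommRing T] : Prop :=
  ∀ P : Ideal T, P.IsPrime → P.IsMaximal

/-- The structure map `algebraMap R U` is an epimorphism in the category of
(commutative) rings. -/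
def IsRingEpi (R U : Type u) [CommRing R] [CommRing U] [Algebra R U] : Prop :=
  ∀ (T : Type u) [CommRing T], ∀ f g : U →+* T,
    f.comp (algebraMap R U) = g.comp (algebraMap R U) → f = g

/-- The projective dimension of the `R`-module `M` is at most `1`: there is a short exact
sequence `0 → P₁ → P₀ → M → 0` with `P₀`, `P₁` projective. -/
def ProjDimLEOne (R : Type u) [CommRing R] (M : Type u) [AddCommGroup M] [Module R M] : Prop :=
  ∃ (P₁ P₀ : ModuleCat.{u} R) (f : P₁ →ₗ[R] P₀) (g : P₀ →ₗ[R] M),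
    Module.Projective R P₁ ∧ Module.Projective R P₀ ∧
      Function.Injective f ∧ Function.Surjective g ∧ LinearMap.range f = LinearMap.ker g

/-- A filter of ideals in a commutative ring `R`. -/
def IsIdealFilter (R : Type u) [CommRing R] (F : Set (Ideal R)) : Prop :=
  ⊤ ∈ F ∧ ∀ I J K : Ideal R, I ∈ F → J ∈ F → I ⊓ J ≤ K → K ∈ F

/-- A Gabriel filter of ideals in a commutative ring `R`. -/
def IsGabrielFilter (R : Type u) [CommRing R] (G : Set (Ideal R)) : Prop :=
  IsIdealFilter R G ∧
    ∀ J : Ideal R, (∃ I ∈ G, ∀ s ∈ I, J.colon (Ideal.span {s}) ∈ G) → J ∈ G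

/-- A filter of ideals has a base of finitely generated ideals. -/
def HasFGBase (R : Type u) [CommRing R] (F : Set (Ideal R)) : Prop :=
  ∀ J ∈ F, ∃ I ∈ F, I ≤ J ∧ I.FG

/-- An `R`-module `N` is `F`-torsion if the annihilator of every element belongs to `F`. -/
def IsFilterTorsion (R : Type u) [CommRing R] (F : Set (Ideal R)) (N : Type u)
    [AddCommGroup N] [Module R N] : Prop :=
  ∀ x : N, Ideal.torsionOf R N x ∈ F

/-- An `R`-module `N` is `I`-torsion if every `s ∈ I` acts locally nilpotently on `N`. -/
def IsIdealTorsion (R : Type u) [CommRing R] (I : Ideal R) (N : Type u)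
    [AddCommGroup N] [Module R N] : Prop :=
  ∀ x : N, ∀ s ∈ I, ∃ n : ℕ, 1 ≤ n ∧ s ^ n • x = 0

/-- The complement of a maximal ideal, as a submonoid. -/
def maxCompl {R : Type u} [CommRing R] {m : Ideal R} (hm : m.IsMaximal) : Submonoid R :=
  haveI := hm.isPrime
  m.primeCompl

end

/-- A commutative ring `R` is `F`-h-local (for a filter of ideals `F`) if every ideal in
`F` is contained in only finitely many maximal ideals and every prime ideal belonging to
`F` is contained in a unique maximal ideal. -/
def IsFHLocal (R : Type u) [CommRing R] (F : Set (Ideal R)) : Prop :=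
  (∀ I ∈ F, {m : Ideal R | m.IsMaximal ∧ I ≤ m}.Finite) ∧
    (∀ P ∈ F, (P : Ideal R).IsPrime → ∃! m : Ideal R, m.IsMaximal ∧ P ≤ m)

/-- The natural map from `N` to the product of its localizations at the maximal ideals
belonging to the filter `F`, with components the localization maps. -/
noncomputable def locMap (R : Type u) [CommRing R] (F : Set (Ideal R)) (N : Type u)
    [AddCommGroup N] [Module R N] :
    N →ₗ[R] ((m : {m : Ideal R // m.IsMaximal ∧ m ∈ F}) →
      LocalizedModule (maxCompl m.2.1) N) :=
  LinearMap.pi fun m => LocalizedModule.mkLinearMap (maxCompl m.2.1) N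

/-!
For an `F`-torsion module over an `F`-h-local ring, `x/1 ∈ N_𝔪` vanishes unless `ann x ⊆ 𝔪`, and
only finitely many maximal ideals contain `ann x ∈ F`; if `x ≠ 0`, a maximal ideal over `ann x`
lies in `F` and sees `x/1 ≠ 0`. For surjectivity the local annihilators
`J_𝔪(x) = ann (x/1 ∈ N_𝔪)` are pairwise comaximal: a maximal `q ⊇ J_𝔪(x)` admits a prime
`p ⊇ ann x` contained in both `q` and `𝔪`, and `p ∈ F` has a unique maximal ideal above it.
A Chinese remainder element `r` with `s r ≡ 1 mod J_𝔪₀(x)` and `r ∈ J_𝔪(x)` for the other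
`𝔪 ⊇ ann x` then sends `r • x` to the family that is `x/s` at `𝔪₀` and zero elsewhere.

Conversely, apply the decomposition to `R/I` and `R/P`: the generator of a cyclic module has a
nonzero component in every nonzero summand, and in the domain `R/P` any two nonzero elements
have a common nonzero multiple, which rules out two nonzero summands.
-/

section

variable {R : Type u} [CommRing R]

namespace IsIdealFilter

variable {F : Set (Ideal R)}

theorem mem_of_le (hF : IsIdealFilter R F) {I J : Ideal R} (hI : I ∈ F) (hIJ : I ≤ J) :
    J ∈ F :=
  hF.2 I I J hI hI (inf_le_left.trans hIJ)

theorem isFilterTorsion_quotient (hF : IsIdealFilter R F) {I : Ideal R} (hI : I ∈ F) :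
    IsFilterTorsion R F (R ⧸ I) := fun x =>
  hF.mem_of_le hI <| I.annihilator_quotient.ge.trans <|
    Module.annihilator_eq_iInf_torsionOf (R := R) (M := R ⧸ I) ▸ iInf_le _ x

end IsIdealFilter

theorem Ideal.torsionOf_quotient_one (I : Ideal R) : Ideal.torsionOf R (R ⧸ I) 1 = I := by
  ext a
  rw [Ideal.mem_torsionOf_iff, Algebra.smul_def, mul_one, Ideal.Quotient.algebraMap_eq,
    Ideal.Quotient.eq_zero_iff_mem]

theorem Ideal.torsionOf_le_torsionOf_smul {N : Type*} [AddCommGroup N] [Module R N] (r : R)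
    (x : N) : Ideal.torsionOf R N x ≤ Ideal.torsionOf R N (r • x) := fun c hc => by
  rw [Ideal.mem_torsionOf_iff, smul_comm, (Ideal.mem_torsionOf_iff x c).mp hc, smul_zero]

theorem Ideal.Quotient.exists_smul_eq_smul_ne_zero {P : Ideal R} [P.IsPrime] {x y : R ⧸ P}
    (hx : x ≠ 0) (hy : y ≠ 0) : ∃ a b : R, a • x = b • y ∧ a • x ≠ 0 := by
  obtain ⟨a, rfl⟩ := Ideal.Quotient.mk_surjective y
  obtain ⟨b, rfl⟩ := Ideal.Quotient.mk_surjective x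
  refine ⟨a, b, ?_, ?_⟩
  · simp only [Algebra.smul_def, Ideal.Quotient.algebraMap_eq, mul_comm]
  · simpa only [Algebra.smul_def, Ideal.Quotient.algebraMap_eq] using mul_ne_zero hy hx

theorem Ideal.isCoprime_of_forall_isMaximal {I J : Ideal R}
    (h : ∀ q : Ideal R, q.IsMaximal → I ≤ q → J ≤ q → False) : IsCoprime I J := by
  rw [Ideal.isCoprime_iff_sup_eq]
  by_contra hne
  obtain ⟨q, hq, hle⟩ := Ideal.exists_le_maximal _ hne
  exact h q hq (le_sup_left.trans hle) (le_sup_right.trans hle)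

section DirectSum

variable {ι : Type*} [DecidableEq ι] {M : ι → Type*} [∀ i, AddCommGroup (M i)]
  [∀ i, Module R (M i)] {P : Type*} [AddCommGroup P] [Module R P]

theorem DirectSum.apply_ne_zero_of_nontrivial (φ : P ≃ₗ[R] DirectSum ι M) {g : P}
    (hg : ∀ w : P, ∃ a : R, a • g = w) (i : ι) [Nontrivial (M i)] : φ g i ≠ 0 := by
  obtain ⟨z, hz⟩ := exists_ne (0 : M i)
  obtain ⟨a, ha⟩ := hg (φ.symm (lof R ι M i z))
  have hφ : a • φ g = lof R ι M i z := by rw [← map_smul, ha, φ.apply_symm_apply]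
  intro h0
  apply hz
  rw [← lof_apply R i z, ← hφ, smul_apply, h0, smul_zero]

theorem DirectSum.eq_of_nontrivial (φ : P ≃ₗ[R] DirectSum ι M)
    (hP : ∀ x y : P, x ≠ 0 → y ≠ 0 → ∃ a b : R, a • x = b • y ∧ a • x ≠ 0)
    {i j : ι} [Nontrivial (M i)] [Nontrivial (M j)] : i = j := by
  by_contra hij
  obtain ⟨z, hz⟩ := exists_ne (0 : M i)
  obtain ⟨z', hz'⟩ := exists_ne (0 : M j)
  have hlof {k : ι} {w : M k} (hw : w ≠ 0) : φ.symm (lof R ι M k w) ≠ 0 := by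
    rw [Ne, LinearEquiv.map_eq_zero_iff]
    exact fun h => hw (by rw [← lof_apply R k w, h, zero_apply])
  obtain ⟨a, b, hab, hne⟩ := hP _ _ (hlof hz) (hlof hz')
  have hφ : a • lof R ι M i z = b • lof R ι M j z' := by
    simpa only [map_smul, φ.apply_symm_apply] using congrArg φ hab
  have haz : a • z = 0 := by
    simpa only [smul_apply, lof_eq_of, of_eq_same, of_eq_of_ne _ _ _ hij, smul_zero] using
      congrArg (· i) hφ
  rw [← map_smul, ← map_smul, haz, map_zero, map_zero] at hne
  exact hne rfl

end DirectSum

section Localization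

variable {N : Type u} [AddCommGroup N] [Module R N] {m : Ideal R} (hm : m.IsMaximal)

theorem localizedModule_mk_eq_zero_iff (x : N) (s : maxCompl hm) :
    LocalizedModule.mk x s = 0 ↔ ¬ Ideal.torsionOf R N x ≤ m := by
  rw [← LocalizedModule.zero_mk (1 : maxCompl hm), LocalizedModule.mk_eq,
    SetLike.not_le_iff_exists]
  simp only [one_smul, smul_zero, Submonoid.smul_def, Ideal.mem_torsionOf_iff, Subtype.exists]
  exact ⟨fun ⟨u, hu, h⟩ => ⟨u, h, hu⟩, fun ⟨u, h, hu⟩ => ⟨u, hu, h⟩⟩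

theorem nontrivial_localizedModule_quotient {I : Ideal R} (hIm : I ≤ m) :
    Nontrivial (LocalizedModule (maxCompl hm) (R ⧸ I)) :=
  nontrivial_of_ne (LocalizedModule.mk 1 1) 0 <| by
    rwa [Ne, localizedModule_mk_eq_zero_iff, Ideal.torsionOf_quotient_one, not_not]

def localTorsionOf (x : N) : Ideal R :=
  Ideal.torsionOf R (LocalizedModule (maxCompl hm) N) (LocalizedModule.mk x 1)

variable {hm}

theorem mem_localTorsionOf_iff {x : N} {a : R} :
    a ∈ localTorsionOf hm x ↔ ¬ Ideal.torsionOf R N (a • x) ≤ m := by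
  rw [localTorsionOf, Ideal.mem_torsionOf_iff, LocalizedModule.smul'_mk,
    localizedModule_mk_eq_zero_iff]

theorem locMap_apply (F : Set (Ideal R)) (x : N) (m : {m : Ideal R // m.IsMaximal ∧ m ∈ F}) :
    locMap R F N x m = LocalizedModule.mk x 1 :=
  rfl

end Localization

namespace IsFHLocal

variable {F : Set (Ideal R)}

theorem eq_of_disjoint (hloc : IsFHLocal R F) (hF : IsIdealFilter R F) {I : Ideal R}
    (hI : I ∈ F) {m q : Ideal R} [m.IsMaximal] [q.IsMaximal]
    (h : Disjoint (I : Set R) ↑(q.primeCompl ⊔ m.primeCompl)) : q = m := by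
  obtain ⟨p, hp, hIp, hpS⟩ := Ideal.exists_le_prime_disjoint I _ h
  have hle (k : Ideal R) [k.IsPrime] (hk : k.primeCompl ≤ q.primeCompl ⊔ m.primeCompl) :
      p ≤ k := fun x hx => by_contra fun hxk => Set.disjoint_left.mp hpS hx (hk hxk)
  obtain ⟨_, _, huniq⟩ := hloc.2 p (hF.mem_of_le hI hIp) hp
  exact (huniq q ⟨‹_›, hle q le_sup_left⟩).trans (huniq m ⟨‹_›, hle m le_sup_right⟩).symm

theorem finite_setOf_le (hloc : IsFHLocal R F) {I : Ideal R} (hI : I ∈ F) :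
    {m : {m : Ideal R // m.IsMaximal ∧ m ∈ F} | I ≤ m.1}.Finite :=
  ((hloc.1 I hI).preimage Subtype.val_injective.injOn).subset fun m hm => ⟨m.2.1, hm⟩

variable {N : Type u} [AddCommGroup N] [Module R N]

theorem eq_of_localTorsionOf_le (hloc : IsFHLocal R F) (hF : IsIdealFilter R F) {x : N}
    (hx : Ideal.torsionOf R N x ∈ F) {m : Ideal R} (hm : m.IsMaximal) {q : Ideal R}
    (hq : q.IsMaximal) (hle : localTorsionOf hm x ≤ q) : q = m := by
  refine hloc.eq_of_disjoint hF hx (Set.disjoint_left.mpr ?_)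
  rintro a ha haS
  obtain ⟨s, hs, t, ht, rfl⟩ := Submonoid.mem_sup.mp haS
  refine hs (hle (mem_localTorsionOf_iff.mpr fun hsx => ht (hsx ?_)))
  rw [Ideal.mem_torsionOf_iff, smul_smul, mul_comm]
  exact (Ideal.mem_torsionOf_iff x _).mp ha

theorem isCoprime_localTorsionOf (hloc : IsFHLocal R F) (hF : IsIdealFilter R F) {x : N}
    (hx : Ideal.torsionOf R N x ∈ F) {m m' : Ideal R} (hm : m.IsMaximal) (hm' : m'.IsMaximal)
    (hne : m ≠ m') : IsCoprime (localTorsionOf hm x) (localTorsionOf hm' x) :=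
  Ideal.isCoprime_of_forall_isMaximal fun _ hq h h' =>
    hne ((hloc.eq_of_localTorsionOf_le hF hx hm hq h).symm.trans
      (hloc.eq_of_localTorsionOf_le hF hx hm' hq h'))

theorem isCoprime_span_singleton_localTorsionOf (hloc : IsFHLocal R F) (hF : IsIdealFilter R F)
    {x : N} (hx : Ideal.torsionOf R N x ∈ F) {m : Ideal R} (hm : m.IsMaximal) {s : R}
    (hs : s ∉ m) : IsCoprime (Ideal.span {s}) (localTorsionOf hm x) :=
  Ideal.isCoprime_of_forall_isMaximal fun _ hq hsq h =>
    hs (hloc.eq_of_localTorsionOf_le hF hx hm hq h ▸ hsq (Ideal.mem_span_singleton_self s))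

theorem exists_locMap_eq_single (hloc : IsFHLocal R F) (hF : IsIdealFilter R F)
    (htor : IsFilterTorsion R F N) (m₀ : {m : Ideal R // m.IsMaximal ∧ m ∈ F})
    (y : LocalizedModule (maxCompl m₀.2.1) N) : ∃ x : N, locMap R F N x = Pi.single m₀ y := by
  classical
  induction y using LocalizedModule.induction_on with
  | _ x s =>
  let T := (hloc.finite_setOf_le (htor x)).toFinset.erase m₀
  have hs : (s : R) ∉ m₀.1 := s.2
  have hcoT : IsCoprime (⨅ m ∈ T, localTorsionOf m.2.1 x) (localTorsionOf m₀.2.1 x) :=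
    (Ideal.isCoprime_biInf fun m hm => hloc.isCoprime_localTorsionOf hF (htor x) _ _
      fun h => Finset.ne_of_mem_erase hm (Subtype.ext h.symm)).symm
  have hco : IsCoprime (Ideal.span {(s : R)} * ⨅ m ∈ T, localTorsionOf m.2.1 x)
      (localTorsionOf m₀.2.1 x) :=
    (hloc.isCoprime_span_singleton_localTorsionOf hF (htor x) m₀.2.1 hs).mul_left hcoT
  obtain ⟨_, hsr, j, hj, hsrj⟩ := Ideal.isCoprime_iff_exists.mp hco
  obtain ⟨r, hr, rfl⟩ := Ideal.mem_span_singleton_mul.mp hsr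
  refine ⟨r • x, funext fun m => ?_⟩
  rw [locMap_apply]
  by_cases hm : m = m₀
  · subst hm
    -- `x / s = (s r • x + j • x) / s`, and `(j • x) / s` vanishes at `m₀`
    have hjx : LocalizedModule.mk (j • x) s = 0 :=
      (localizedModule_mk_eq_zero_iff _ _ _).mpr (mem_localTorsionOf_iff.mp hj)
    rw [Pi.single_eq_same, ← LocalizedModule.mk_cancel s, ← add_zero (LocalizedModule.mk _ _),
      ← hjx, LocalizedModule.mk_add_mk, ← smul_add, LocalizedModule.mk_cancel_common_left,
      Submonoid.smul_def, smul_smul, ← add_smul, hsrj, one_smul]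
  · rw [Pi.single_eq_of_ne hm, localizedModule_mk_eq_zero_iff, ← mem_localTorsionOf_iff]
    by_cases hxm : Ideal.torsionOf R N x ≤ m.1
    · exact (Submodule.mem_iInf _).mp ((Submodule.mem_iInf _).mp hr m)
        (Finset.mem_erase.mpr ⟨hm, (hloc.finite_setOf_le (htor x)).mem_toFinset.mpr hxm⟩)
    · exact mem_localTorsionOf_iff.mpr fun h =>
        hxm ((Ideal.torsionOf_le_torsionOf_smul r x).trans h)

end IsFHLocal

section Forward

variable {F : Set (Ideal R)} {N : Type u} [AddCommGroup N] [Module R N]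

theorem locMap_injective (hF : IsIdealFilter R F) (htor : IsFilterTorsion R F N) :
    Function.Injective (locMap R F N) := by
  rw [injective_iff_map_eq_zero]
  intro x hx
  by_contra hx0
  obtain ⟨q, hq, hle⟩ :=
    Ideal.exists_le_maximal _ ((Ideal.torsionOf_eq_top_iff (R := R) x).not.mpr hx0)
  exact (localizedModule_mk_eq_zero_iff hq x 1).mp
    (congrFun hx ⟨q, hq, hF.mem_of_le (htor x) hle⟩) hle

theorem IsFHLocal.finite_setOf_locMap_ne_zero (hloc : IsFHLocal R F)
    (htor : IsFilterTorsion R F N) (x : N) : {m | locMap R F N x m ≠ 0}.Finite :=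
  (hloc.finite_setOf_le (htor x)).subset fun _ hm =>
    not_not.mp fun h => hm ((localizedModule_mk_eq_zero_iff _ _ _).mpr h)

theorem IsFHLocal.exists_locMap_eq (hloc : IsFHLocal R F) (hF : IsIdealFilter R F)
    (htor : IsFilterTorsion R F N)
    (g : (m : {m : Ideal R // m.IsMaximal ∧ m ∈ F}) → LocalizedModule (maxCompl m.2.1) N)
    (hg : {m | g m ≠ 0}.Finite) : ∃ x : N, locMap R F N x = g := by
  classical
  choose x hx using fun m => hloc.exists_locMap_eq_single hF htor m (g m)
  refine ⟨∑ m ∈ hg.toFinset, x m, funext fun m => ?_⟩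
  simp only [map_sum, Finset.sum_apply, hx, Finset.sum_pi_single, hg.mem_toFinset]
  exact ite_eq_left_iff.mpr fun h => (not_not.mp h).symm

end Forward

section Converse

variable {F : Set (Ideal R)}

theorem finite_setOf_isMaximal_le_of_linearEquiv (hF : IsIdealFilter R F) {I : Ideal R}
    (hI : I ∈ F) (φ : (R ⧸ I) ≃ₗ[R] DirectSum {m : Ideal R // m.IsMaximal ∧ m ∈ F}
      (fun m => LocalizedModule (maxCompl m.2.1) (R ⧸ I))) :
    {m : Ideal R | m.IsMaximal ∧ I ≤ m}.Finite := by
  classical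
  refine ((φ 1).support.finite_toSet.image Subtype.val).subset ?_
  rintro m ⟨hm, hIm⟩
  have := nontrivial_localizedModule_quotient hm hIm
  refine ⟨⟨m, hm, hF.mem_of_le hI hIm⟩, DFinsupp.mem_support_iff.mpr ?_, rfl⟩
  refine DirectSum.apply_ne_zero_of_nontrivial φ (fun w => ?_) _
  obtain ⟨a, rfl⟩ := Ideal.Quotient.mk_surjective w
  exact ⟨a, by rw [Algebra.smul_def, mul_one, Ideal.Quotient.algebraMap_eq]⟩

theorem existsUnique_isMaximal_le_of_linearEquiv (hF : IsIdealFilter R F) {P : Ideal R}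
    (hPF : P ∈ F) (hP : P.IsPrime)
    (φ : (R ⧸ P) ≃ₗ[R] DirectSum {m : Ideal R // m.IsMaximal ∧ m ∈ F}
      (fun m => LocalizedModule (maxCompl m.2.1) (R ⧸ P))) :
    ∃! m : Ideal R, m.IsMaximal ∧ P ≤ m := by
  classical
  obtain ⟨m, hm, hPm⟩ := Ideal.exists_le_maximal P hP.ne_top
  refine ⟨m, ⟨hm, hPm⟩, fun m' ⟨hm', hPm'⟩ => ?_⟩
  have := nontrivial_localizedModule_quotient hm hPm
  have := nontrivial_localizedModule_quotient hm' hPm'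
  exact congrArg Subtype.val <| DirectSum.eq_of_nontrivial φ
    (fun _ _ => Ideal.Quotient.exists_smul_eq_smul_ne_zero)
    (i := ⟨m', hm', hF.mem_of_le hPF hPm'⟩) (j := ⟨m, hm, hF.mem_of_le hPF hPm⟩)

end Converse

end

/-- Let `R` be a commutative ring and `F` a filter of ideals of `R`.
If `R` is `F`-h-local, then for every `F`-torsion `R`-module `N` the natural map
`N → ∏_𝔪 N_𝔪` (components the localization maps, over maximal ideals `𝔪 ∈ F`) factors
through the submodule `⊕_𝔪 N_𝔪 ⊆ ∏_𝔪 N_𝔪` and induces an isomorphism `N ≅ ⊕_𝔪 N_𝔪`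
(i.e. every `locMap x` has finite support, `locMap` is injective, and every finitely
supported family is in its range). Conversely, if every `F`-torsion `R`-module `N` is
isomorphic as an `R`-module to `⊕_𝔪 N_𝔪`, then `R` is `F`-h-local. -/
theorem stmt6 (R : Type u) [CommRing R] (F : Set (Ideal R)) (hF : IsIdealFilter R F) :
    (IsFHLocal R F →
      ∀ (N : Type u) [AddCommGroup N] [Module R N], IsFilterTorsion R F N →
        (∀ x : N, {m : {m : Ideal R // m.IsMaximal ∧ m ∈ F} |
            locMap R F N x m ≠ 0}.Finite) ∧
        Function.Injective (locMap R F N) ∧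
        (∀ g : (m : {m : Ideal R // m.IsMaximal ∧ m ∈ F}) →
            LocalizedModule (maxCompl m.2.1) N,
          {m | g m ≠ 0}.Finite → ∃ x : N, locMap R F N x = g)) ∧
    ((∀ (N : Type u) [AddCommGroup N] [Module R N], IsFilterTorsion R F N →
        Nonempty (N ≃ₗ[R] DirectSum {m : Ideal R // m.IsMaximal ∧ m ∈ F}
          (fun m => LocalizedModule (maxCompl m.2.1) N))) →
      IsFHLocal R F) := by
  refine ⟨fun hloc N _ _ htor => ⟨hloc.finite_setOf_locMap_ne_zero htor,
    locMap_injective hF htor, hloc.exists_locMap_eq hF htor⟩, fun h => ⟨fun I hI => ?_,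
    fun P hPF hP => ?_⟩⟩
  · obtain ⟨φ⟩ := h (R ⧸ I) (hF.isFilterTorsion_quotient hI)
    exact finite_setOf_isMaximal_le_of_linearEquiv hF hI φ
  · obtain ⟨φ⟩ := h (R ⧸ P) (hF.isFilterTorsion_quotient hPF)
    exact existsUnique_isMaximal_le_of_linearEquiv hF hPF hP φ
end

section
/- Let R be a commutative ring and 𝔾 a Gabriel filter of ideals in R with a base of finitely generated ideals such that for every I ∈ 𝔾 the ring R/I is semilocal of Krull dimension zero. Let 𝔪 be a maximal ideal of R with 𝔪 ∈ 𝔾. Then an R-module N is a 𝔾-torsion module on which every element of R \ 𝔪 acts invertibly (i.e., a 𝔾-torsion R_𝔪-module) if and only if N is an 𝔪-torsion R-module. -/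
universe u

open CategoryTheory

/-!
If `N` is an `𝔪`-torsion module, every `s ∉ 𝔪` acts invertibly on `N` because `s` is invertible
modulo `𝔪` and `𝔪` acts locally nilpotently; and the annihilator of `x ∈ N` contains a power of a
finitely generated ideal `I ⊆ 𝔪` of `𝔾`, which lies in `𝔾` since Gabriel filters are closed under
products. Conversely, if `J` is the annihilator of `x` and `R ⧸ J` has Krull dimension zero, then
for `s ∈ 𝔪` some `t * sⁿ` with `t ∉ 𝔪` lies in `J`: otherwise a prime over `J` avoiding all of
them would sit inside `𝔪` without containing `s`, yet it contains a minimal prime over `J`, which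
is maximal and hence equal to `𝔪`. As `t` acts injectively, `sⁿ x = 0`.
-/

variable {R : Type u} [CommRing R]

theorem Ideal.exists_notMem_mul_pow_mem_of_isKrullDimZero_quotient {J m : Ideal R} [m.IsPrime]
    (hJ : IsKrullDimZero (R ⧸ J)) {s : R} (hs : s ∈ m) : ∃ t ∉ m, ∃ n : ℕ, t * s ^ n ∈ J := by
  by_contra! h
  set S : Submonoid R := m.primeCompl ⊔ Submonoid.powers s
  have hdisj : Disjoint (J : Set R) S := by
    refine Set.disjoint_left.mpr fun x hxJ hx => ?_
    obtain ⟨t, ht, _, ⟨n, rfl⟩, rfl⟩ := Submonoid.mem_sup.mp hx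
    exact h t ht n hxJ
  obtain ⟨P, hP, hJP, hPdisj⟩ := J.exists_le_prime_disjoint S hdisj
  have hPm : P ≤ m := fun x hxP => by
    by_contra hxm
    exact Set.disjoint_left.mp hPdisj hxP (Submonoid.mem_sup_left (show x ∈ m.primeCompl from hxm))
  have hsP : s ∉ P := fun hsP =>
    Set.disjoint_left.mp hPdisj hsP (Submonoid.mem_sup_right (Submonoid.mem_powers s))
  obtain ⟨Q, hQ, hQP⟩ := Ideal.exists_minimalPrimes_le hJP
  have hQmax : Q.IsMaximal :=
    Ideal.krullDimLE_zero_quotient_iff_forall_minimalPrimes_isMaximal.mp (.mk₀ hJ) Q hQ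
  have hQm : Q = m := hQmax.eq_of_le Ideal.IsPrime.ne_top' (hQP.trans hPm)
  exact hsP (hQP (hQm ▸ hs))

variable {G : Set (Ideal R)}

theorem IsIdealFilter.mem_of_le_s7 (hG : IsIdealFilter R G) {I K : Ideal R} (hI : I ∈ G)
    (hIK : I ≤ K) : K ∈ G :=
  hG.2 I I K hI hI (inf_le_left.trans hIK)

theorem IsGabrielFilter.mul_mem (hG : IsGabrielFilter R G) {I J : Ideal R} (hI : I ∈ G)
    (hJ : J ∈ G) : I * J ∈ G :=
  hG.2 _ ⟨I, hI, fun s hs => hG.1.mem_of_le_s7 hJ fun r hr => by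
    rw [Ideal.mem_colon_span_singleton, mul_comm r s]
    exact Ideal.mul_mem_mul hs hr⟩

theorem IsGabrielFilter.pow_mem (hG : IsGabrielFilter R G) {I : Ideal R} (hI : I ∈ G) (n : ℕ) :
    I ^ n ∈ G := by
  induction n with
  | zero => simpa using hG.1.1
  | succ k ih => rw [pow_succ]; exact hG.mul_mem ih hI

variable {N : Type u} [AddCommGroup N] [Module R N]

theorem IsIdealTorsion.mono {I J : Ideal R} (h : IsIdealTorsion R J N) (hIJ : I ≤ J) :
    IsIdealTorsion R I N :=
  fun x s hs => h x s (hIJ hs)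

theorem IsIdealTorsion.exists_pow_le_torsionOf {I : Ideal R} (h : IsIdealTorsion R I N)
    (hI : I.FG) (x : N) : ∃ k : ℕ, I ^ k ≤ Ideal.torsionOf R N x :=
  Ideal.exists_pow_le_of_le_radical_of_fg (fun s hs => by
    obtain ⟨n, -, hn⟩ := h x s hs
    exact ⟨n, (Ideal.mem_torsionOf_iff x _).mpr hn⟩) hI

theorem IsIdealTorsion.isFilterTorsion {I : Ideal R} (h : IsIdealTorsion R I N)
    (hG : IsGabrielFilter R G) (hfg : HasFGBase R G) (hIG : I ∈ G) : IsFilterTorsion R G N := by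
  intro x
  obtain ⟨I₀, hI₀G, hI₀I, hI₀fg⟩ := hfg I hIG
  obtain ⟨k, hk⟩ := (h.mono hI₀I).exists_pow_le_torsionOf hI₀fg x
  exact hG.1.mem_of_le_s7 (hG.pow_mem hI₀G k) hk

theorem IsIdealTorsion.bijective_smul_of_mul_add_eq_one {I : Ideal R} (h : IsIdealTorsion R I N)
    {r s t : R} (ht : t ∈ I) (hrst : r * s + t = 1) : Function.Bijective fun x : N => s • x := by
  -- `s` is invertible modulo `tⁿ`, with inverse `r (1 + t + ⋯ + tⁿ⁻¹)`.
  have hinv : ∀ y : N, ∃ c : R, s • c • y = y := by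
    intro y
    obtain ⟨n, -, hn⟩ := h y t ht
    refine ⟨r * ∑ i ∈ Finset.range n, t ^ i, ?_⟩
    have hgeom : s * (r * ∑ i ∈ Finset.range n, t ^ i) = 1 - t ^ n := by
      linear_combination (∑ i ∈ Finset.range n, t ^ i) * hrst - geom_sum_mul t n
    rw [← mul_smul, hgeom, sub_smul, one_smul, hn, sub_zero]
  refine ⟨fun a b (hab : s • a = s • b) => ?_, fun y => ?_⟩
  · obtain ⟨c, hc⟩ := hinv (a - b)
    rw [← sub_eq_zero, ← hc, smul_comm, smul_sub, hab, sub_self, smul_zero]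
  · obtain ⟨c, hc⟩ := hinv y
    exact ⟨c • y, hc⟩

theorem IsFilterTorsion.isIdealTorsion (hT : IsFilterTorsion R G N)
    (hG : ∀ I ∈ G, IsKrullDimZero (R ⧸ I)) {m : Ideal R} [m.IsPrime]
    (hinj : ∀ s ∉ m, Function.Injective fun x : N => s • x) : IsIdealTorsion R m N := by
  intro x s hs
  obtain ⟨t, htm, n, hn⟩ :=
    Ideal.exists_notMem_mul_pow_mem_of_isKrullDimZero_quotient (hG _ (hT x)) hs
  refine ⟨n + 1, n.succ_pos, hinj t htm ?_⟩
  change t • s ^ (n + 1) • x = t • 0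
  rw [pow_succ', mul_smul, smul_comm t s, ← mul_smul t, (Ideal.mem_torsionOf_iff x _).mp hn,
    smul_zero, smul_zero]

/-- Let `R` be a commutative ring and `G` a Gabriel filter of ideals in
`R` with a base of finitely generated ideals such that `R/I` is semilocal of Krull
dimension zero for every `I ∈ G`. Let `𝔪 ∈ G` be a maximal ideal of `R`. Then an
`R`-module `N` is a `G`-torsion module on which every element of `R \ 𝔪` acts invertibly
(i.e. a `G`-torsion `R_𝔪`-module) if and only if `N` is an `𝔪`-torsion `R`-module. -/
theorem stmt7 (R : Type u) [CommRing R] (G : Set (Ideal R))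
    (hGab : IsGabrielFilter R G) (hfg : HasFGBase R G)
    (hnil : ∀ I ∈ G, IsSemilocal (R ⧸ I) ∧ IsKrullDimZero (R ⧸ I))
    (m : Ideal R) (hm : m.IsMaximal) (hmG : m ∈ G)
    (N : Type u) [AddCommGroup N] [Module R N] :
    (IsFilterTorsion R G N ∧ ∀ s ∉ m, Function.Bijective fun x : N => s • x) ↔
      IsIdealTorsion R m N := by
  have := hm.isPrime
  constructor
  · rintro ⟨hT, hbij⟩
    exact hT.isIdealTorsion (fun I hI => (hnil I hI).2) fun s hs => (hbij s hs).1
  · intro h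
    refine ⟨h.isFilterTorsion hGab hfg hmG, fun s hs => ?_⟩
    obtain ⟨r, t, ht, hrst⟩ := hm.exists_inv hs
    exact h.bijective_smul_of_mul_add_eq_one ht hrst
end

section
/- Let R be a commutative ring and 𝔪 ⊆ R a maximal ideal. Then every element of R \ 𝔪 acts invertibly on any 𝔪-contramodule R-module C; that is, the R-module structure of C extends (uniquely) to an R_𝔪-module structure, where R_𝔪 is the localization of R at 𝔪. -/
universe u

open CategoryTheory

/-!
If `s ∉ 𝔪`, then `r * s = 1 - t` for some `r` and some `t ∈ 𝔪`, so it suffices that `1 - t` acts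
bijectively on every `t`-contramodule `C`. Everything is read off the free resolution
`0 → R[X] --(tX - 1)--> R[X] → R[t⁻¹] → 0`. A sequence with `t • c (n + 1) = c n` is a map
`R[t⁻¹] → C`, so `Hom_R(R[t⁻¹], C) = 0` kills the fixed points of `t` (constant sequences):
injectivity. `Ext¹_R(R[t⁻¹], C) = 0` solves `t • d (n + 1) - d n = b` for all `n`; the differences
of `d` form such a sequence, so `d` is constant and `(1 - t) • (-d 0) = b`: surjectivity.
-/

open Limits ZeroObject Polynomial

namespace CategoryTheory.ShortComplex

variable {C : Type*} [Category C] [Abelian C] (S : ShortComplex C)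

noncomputable def twoTermComplex : ChainComplex C ℕ :=
  ChainComplex.of (fun | 0 => S.X₂ | 1 => S.X₁ | _ + 2 => 0) (fun | 0 => S.f | _ + 1 => 0)
    (fun _ => zero_comp)

lemma twoTermComplex_d_one_zero : S.twoTermComplex.d 1 0 = S.f := by
  simp only [twoTermComplex]
  exact ChainComplex.of_d _ _ 0

instance [Projective S.X₁] [Projective S.X₂] (n : ℕ) : Projective (S.twoTermComplex.X n) := by
  obtain _ | _ | n := n
  · exact ‹Projective S.X₂›
  · exact ‹Projective S.X₁›
  · exact Projective.zero_projective

noncomputable def twoTermπ : S.twoTermComplex ⟶ (ChainComplex.single₀ C).obj S.X₃ :=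
  (ChainComplex.toSingle₀Equiv _ _).symm ⟨S.g, by rw [twoTermComplex_d_one_zero]; exact S.zero⟩

lemma twoTermπ_f_zero : S.twoTermπ.f 0 = S.g :=
  ChainComplex.toSingle₀Equiv_symm_apply_f_zero _ _

variable {S}

lemma ShortExact.twoTermComplex_exactAt_succ (hS : S.ShortExact) (n : ℕ) :
    S.twoTermComplex.ExactAt (n + 1) := by
  rw [HomologicalComplex.exactAt_iff' _ (n + 2) (n + 1) n (by simp) (by simp)]
  obtain _ | n := n
  · rw [ShortComplex.exact_iff_mono _ ((isZero_zero C).eq_of_src _ _)]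
    exact (twoTermComplex_d_one_zero S ▸ hS.mono_f : Mono (S.twoTermComplex.d 1 0))
  · exact ShortComplex.exact_of_isZero_X₂ _ (isZero_zero C)

noncomputable def ShortExact.projectiveResolution (hS : S.ShortExact) [Projective S.X₁]
    [Projective S.X₂] : ProjectiveResolution S.X₃ where
  complex := S.twoTermComplex
  π := S.twoTermπ
  quasiIso := ⟨fun n => by
    obtain _ | n := n
    · rw [ChainComplex.quasiIsoAt₀_iff, ShortComplex.quasiIso_iff_of_zeros']
      · refine (ShortComplex.exact_and_epi_g_iff_of_iso (S₂ := S) ?_).2 ⟨hS.exact, hS.epi_g⟩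
        exact ShortComplex.isoMk (Iso.refl _) (Iso.refl _) (Iso.refl _)
          ((Category.id_comp _).trans
            ((twoTermComplex_d_one_zero S).symm.trans (Category.comp_id _).symm))
          (by
            simp only [twoTermπ_f_zero, HomologicalComplex.shortComplexFunctor'_map_τ₂]
            exact (Category.id_comp _).trans (Category.comp_id _).symm)
      all_goals rfl
    · rw [quasiIsoAt_iff_exactAt']
      · exact hS.twoTermComplex_exactAt_succ n
      · exact ChainComplex.exactAt_succ_single_obj _ _⟩

/-- Computed with the resolution `S.X₁ → S.X₂`, `Ext¹(S.X₃, Y)` is the cokernel of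
`Hom(S.X₂, Y) → Hom(S.X₁, Y)`. -/
lemma ShortExact.exists_f_comp_eq_of_isZero_ext_one {R : Type*} [Ring R] [Linear R C]
    [EnoughProjectives C] (hS : S.ShortExact) [Projective S.X₁] [Projective S.X₂] {Y : C}
    (hY : IsZero (((Ext R C 1).obj (Opposite.op S.X₃)).obj Y)) (h : S.X₁ ⟶ Y) :
    ∃ k : S.X₂ ⟶ Y, S.f ≫ k = h := by
  set K := S.twoTermComplex.linearYonedaObj R Y
  have hK : K.ExactAt 1 := (K.exactAt_iff_isZero_homology 1).2
    (hY.of_iso (hS.projectiveResolution.isoExt 1 Y).symm)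
  rw [HomologicalComplex.exactAt_iff' K 0 1 2 (by simp) (by simp),
    ShortComplex.moduleCat_exact_iff] at hK
  obtain ⟨k, hk⟩ := hK h ((isZero_zero C).eq_of_src _ _)
  exact ⟨k, twoTermComplex_d_one_zero S ▸ hk⟩

end CategoryTheory.ShortComplex

namespace Polynomial

variable {R : Type u} [CommRing R] (t : R)

lemma C_mul_X_sub_one_mem_nonZeroDivisors : C t * X - 1 ∈ nonZeroDivisors R[X] := by
  apply mem_nonZeroDivisors_of_trailingCoeff
  nontriviality R
  have hcoeff : (C t * X - 1).coeff 0 = -1 := by simp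
  rw [trailingCoeff, natTrailingDegree_eq_zero.2 (Or.inr (by simp [hcoeff])), hcoeff]
  exact isUnit_one.neg.mem_nonZeroDivisors

lemma apply_C_mul_X_sub_one_mul_monomial {M : Type*} [AddCommGroup M] [Module R M]
    (k : R[X] →ₗ[R] M) (n : ℕ) :
    k ((C t * X - 1) * monomial n 1) = t • k (monomial (n + 1) 1) - k (monomial n 1) := by
  have hmon : monomial (n + 1) t = t • monomial (n + 1) (1 : R) := by
    rw [smul_monomial, smul_eq_mul, mul_one]
  rw [sub_mul, one_mul, mul_assoc, X_mul_monomial, C_mul_monomial, mul_one, map_sub, hmon,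
    map_smul]

lemma basisMonomials_constr_monomial {M : Type*} [AddCommGroup M] [Module R M] (n : ℕ)
    (c : ℕ → M) :
    (basisMonomials R).constr R c (monomial n 1) = c n := by
  simpa only [coe_basisMonomials] using (basisMonomials R).constr_basis R c n

end Polynomial

namespace Localization

variable {R : Type u} [CommRing R] (t : R)

/-- The free resolution `0 → R[X] --(tX - 1)--> R[X] → R[t⁻¹] → 0`, the second map being
`X ↦ t⁻¹`. -/
noncomputable def awayShortComplex : ShortComplex (ModuleCat.{u} R) where
  X₁ := ModuleCat.of R R[X]
  X₂ := ModuleCat.of R R[X]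
  X₃ := ModuleCat.of R (Away t)
  f := ModuleCat.ofHom (LinearMap.mulLeft R (C t * X - 1))
  g := ModuleCat.ofHom ((awayEquivAdjoin t).symm.toLinearMap ∘ₗ (AdjoinRoot.mkₐ _).toLinearMap)
  zero := by
    ext p
    simp

lemma awayShortComplex_shortExact : (awayShortComplex t).ShortExact where
  exact := by
    rw [ShortComplex.moduleCat_exact_iff]
    intro p hp
    obtain ⟨q, rfl⟩ := AdjoinRoot.mk_eq_zero.1
      ((awayEquivAdjoin t).symm.injective (hp.trans (map_zero _).symm))
    exact ⟨q, rfl⟩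
  mono_f := by
    rw [ModuleCat.mono_iff_injective]
    exact (injective_iff_map_eq_zero _).2 fun (p : R[X]) =>
      mem_nonZeroDivisors_iff_left.1 (C_mul_X_sub_one_mem_nonZeroDivisors t) p
  epi_g := by
    rw [ModuleCat.epi_iff_surjective]
    exact (awayEquivAdjoin t).symm.surjective.comp AdjoinRoot.mk_surjective

instance : Projective (awayShortComplex t).X₁ := ModuleCat.projective_of_free (basisMonomials R)

instance : Projective (awayShortComplex t).X₂ := ModuleCat.projective_of_free (basisMonomials R)

variable {C : Type u} [AddCommGroup C] [Module R C]

lemma eq_zero_of_smul_succ_eq (hHom : ∀ f : Away t →ₗ[R] C, f = 0) {c : ℕ → C}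
    (hc : ∀ n, t • c (n + 1) = c n) (n : ℕ) : c n = 0 := by
  set h := (basisMonomials R).constr R c
  have hf : (awayShortComplex t).f ≫ ModuleCat.ofHom h = 0 := by
    ext1
    refine (basisMonomials R).ext fun m => ?_
    simp only [coe_basisMonomials]
    exact (apply_C_mul_X_sub_one_mul_monomial t h m).trans
      (by rw [basisMonomials_constr_monomial, basisMonomials_constr_monomial, hc, sub_self]; rfl)
  obtain ⟨k, hk⟩ := CokernelCofork.IsColimit.desc' (awayShortComplex_shortExact t).gIsCokernel _ hf
  rw [show k = 0 from ModuleCat.hom_ext (hHom k.hom), Limits.comp_zero] at hk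
  have hh : h = 0 := congrArg ModuleCat.Hom.hom hk.symm
  rw [← basisMonomials_constr_monomial (R := R) n c]
  exact LinearMap.congr_fun hh _

lemma exists_smul_succ_sub_eq (hExt : Subsingleton (extM R (Away t) C 1)) (b : ℕ → C) :
    ∃ d : ℕ → C, ∀ n, t • d (n + 1) - d n = b n := by
  obtain ⟨k, hk⟩ := (awayShortComplex_shortExact t).exists_f_comp_eq_of_isZero_ext_one
    (@ModuleCat.isZero_of_subsingleton _ _ _ hExt) (ModuleCat.ofHom ((basisMonomials R).constr R b))
  let k' : R[X] →ₗ[R] C := k.hom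
  refine ⟨fun n => k' (monomial n 1), fun n => ?_⟩
  rw [← apply_C_mul_X_sub_one_mul_monomial, ← basisMonomials_constr_monomial (R := R) n b]
  exact LinearMap.congr_fun (congrArg ModuleCat.Hom.hom hk) (monomial n 1)

end Localization

lemma IsTContra.bijective_one_sub_smul {R : Type u} [CommRing R] {t : R} {C : Type u}
    [AddCommGroup C] [Module R C] (hC : IsTContra R t C) :
    Function.Bijective fun c : C => (1 - t) • c := by
  constructor
  · intro a b (hab : (1 - t) • a = (1 - t) • b)
    have hfix : t • (a - b) = a - b := by linear_combination (norm := module) -hab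
    exact sub_eq_zero.1 (Localization.eq_zero_of_smul_succ_eq t hC.1 (c := fun _ => a - b)
      (fun _ => hfix) 0)
  · intro b
    obtain ⟨d, hd⟩ := Localization.exists_smul_succ_sub_eq t hC.2 fun _ => b
    have hconst : ∀ n, d (n + 1) - d n = 0 :=
      Localization.eq_zero_of_smul_succ_eq t hC.1 (c := fun n => d (n + 1) - d n) fun n => by
        linear_combination (norm := module) hd (n + 1) - hd n
    exact ⟨-d 0, by linear_combination (norm := module) hd 0 - t • hconst 0⟩

/-- Let `R` be a commutative ring and `𝔪 ⊆ R` a maximal ideal. Then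
every element of `R \ 𝔪` acts invertibly on any `𝔪`-contramodule `R`-module `C`
(so the `R`-module structure of `C` extends uniquely to an `R_𝔪`-module structure). -/
theorem stmt9 (R : Type u) [CommRing R] (m : Ideal R) (hm : m.IsMaximal)
    (C : Type u) [AddCommGroup C] [Module R C] (hC : IsIdealContra R m C) :
    ∀ s ∉ m, Function.Bijective fun c : C => s • c := by
  intro s hs
  obtain ⟨r, i, hi, hri⟩ := hm.exists_inv hs
  have hbij := (hC i hi).bijective_one_sub_smul
  rw [← eq_sub_of_add_eq hri] at hbij
  refine ⟨.of_comp (f := fun c : C => r • c) ?_, .of_comp (g := fun c : C => r • c) ?_⟩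
  · simpa only [Function.comp_def, smul_smul] using hbij.1
  · simpa only [Function.comp_def, smul_smul, mul_comm s r] using hbij.2
end

section
/- Let R be a commutative ring, t ∈ R an element, and C a t-contramodule R-module. If C = tC, then C = 0; equivalently, if C ≠ 0 then C/tC ≠ 0. -/
universe u

open CategoryTheory

/-!
Since `C = tC`, every `x₀ ∈ C` starts a sequence `x₀ = t x₁, x₁ = t x₂, …`. Such sequences form a
module on which `t` acts invertibly (the inverse is the shift), so the sequence through `x₀` is the
image of `1` under a map from `R[t⁻¹]`. Evaluating at the first term gives a map `R[t⁻¹] → C`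
sending `1` to `x₀`, and it vanishes because `Hom_R(R[t⁻¹], C) = 0`.
-/

section Localization

variable {R : Type*} [CommSemiring R] {t : R} {M : Type*} [AddCommMonoid M] [Module R M]

theorem exists_linearMap_localizationAway_apply_one
    (ht : IsUnit (algebraMap R (Module.End R M) t)) (m : M) :
    ∃ f : Localization.Away t →ₗ[R] M, f 1 = m := by
  have hunit : ∀ s : Submonoid.powers t, IsUnit (algebraMap R (Module.End R M) s) := by
    rintro ⟨_, n, rfl⟩
    simpa only [map_pow] using ht.pow n
  let ι := Algebra.linearMap R (Localization.Away t)
  refine ⟨IsLocalizedModule.lift (Submonoid.powers t) ι (LinearMap.toSpanSingleton R M m) hunit, ?_⟩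
  simpa [ι] using
    IsLocalizedModule.lift_apply (Submonoid.powers t) ι (LinearMap.toSpanSingleton R M m) hunit 1

end Localization

section DivisionSequences

variable {R : Type*} [CommSemiring R] (t : R) (C : Type*) [AddCommMonoid C] [Module R C]

def divisionSequences : Submodule R (ℕ → C) where
  carrier := {x | ∀ n, t • x (n + 1) = x n}
  add_mem' hx hy n := by simp only [Pi.add_apply, smul_add, hx n, hy n]
  zero_mem' n := by simp
  smul_mem' r x hx n := by simp only [Pi.smul_apply, smul_comm t r, hx n]

variable {t C}

theorem exists_mem_divisionSequences_apply_zero (h : ∀ x : C, ∃ y : C, t • y = x) (x : C) :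
    ∃ s ∈ divisionSequences t C, s 0 = x := by
  choose d hd using h
  exact ⟨fun n ↦ d^[n] x, fun n ↦ by simp only [Function.iterate_succ_apply', hd], rfl⟩

variable (t C)

theorem isUnit_algebraMap_divisionSequences :
    IsUnit (algebraMap R (Module.End R (divisionSequences t C)) t) := by
  rw [Module.End.isUnit_iff]
  constructor
  · intro x y hxy
    ext n
    have hn := congrArg (fun z : divisionSequences t C ↦ (z : ℕ → C) (n + 1)) hxy
    simpa only [Module.algebraMap_end_apply, Submodule.coe_smul, Pi.smul_apply,
      x.2 n, y.2 n] using hn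
  · intro x
    refine ⟨⟨fun n ↦ (x : ℕ → C) (n + 1), fun n ↦ x.2 (n + 1)⟩, ?_⟩
    ext n
    exact x.2 n

end DivisionSequences

/-- Let `R` be a commutative ring, `t ∈ R`, and `C` a `t`-contramodule
`R`-module. If `C = tC` then `C = 0` (equivalently, `C ≠ 0` implies `C/tC ≠ 0`). -/
theorem stmt14 (R : Type u) [CommRing R] (t : R)
    (C : Type u) [AddCommGroup C] [Module R C] (hC : IsTContra R t C)
    (h : ∀ x : C, ∃ y : C, t • y = x) :
    ∀ x : C, x = 0 := by
  intro x
  obtain ⟨s, hs, rfl⟩ := exists_mem_divisionSequences_apply_zero h x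
  obtain ⟨f, hf⟩ :=
    exists_linearMap_localizationAway_apply_one (isUnit_algebraMap_divisionSequences t C) ⟨s, hs⟩
  have hzero := LinearMap.congr_fun
    (hC.1 ((LinearMap.proj 0).comp ((divisionSequences t C).subtype.comp f))) 1
  simpa [hf] using hzero
end

section
/- Let R be a commutative ring and I = (s₁, …, s_m) ⊆ R a finitely generated ideal. Let B be an R-module with B = IB, and let C be an I-contramodule R-module. Then Hom_R(B, C) = 0. Equivalently, an I-contramodule R-module C has no nonzero R-submodule D with D = ID. -/
universe u

open CategoryTheory

/-!
`Hom_R(R[t⁻¹], C) = 0` says that every sequence with `c n = t • c (n + 1)` vanishes, and,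
computing `Ext¹` with the telescope resolution of `R[t⁻¹]`, `Ext¹_R(R[t⁻¹], C) = 0` says that
every system `b n = x n + t • b (n + 1)` has a solution. So over a `t`-contramodule the series
`∑ₖ tᵏ xₖ` exist and are unique, and the submodules closed under them are stable under
intersections, finite sums and `a • -`, hence under `J • -` for a finitely generated ideal `J`.

If `D ≤ I • D` with `I = (t) + J`, let `K` be the smallest such closed submodule containing `J • D`.
Writing `d = x₀ + t d₁`, `d₁ = x₁ + t d₂`, … with `xᵢ ∈ J • D` gives `d = ∑ tᵏ xₖ ∈ K`, so `D ≤ K`;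
and `J • K` is closed and contains `J • D`, so `K ≤ J • K`. Induction on the number of generators
gives `K = 0`, and the theorem follows for `D` the image of `f`.
-/

open Pointwise

section Telescope

variable {R : Type u} [CommRing R] (t : R)

/- The free resolution `0 → R^(ℕ) → R^(ℕ) → R[t⁻¹] → 0`, `eₙ ↦ eₙ - t eₙ₊₁`, `eₙ ↦ t⁻ⁿ`,
exhibiting `R[t⁻¹]` as the colimit of `R --t--> R --t--> ⋯`. -/
noncomputable def telescopeMap : (ℕ →₀ R) →ₗ[R] (ℕ →₀ R) :=
  LinearMap.id - t • Finsupp.lmapDomain R R Nat.succ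

noncomputable def telescopeAugmentation : (ℕ →₀ R) →ₗ[R] Localization.Away t :=
  Finsupp.linearCombination R fun n => Localization.mk 1 (Submonoid.pow t n)

variable {t}

theorem telescopeMap_single (n : ℕ) (r : R) :
    telescopeMap t (Finsupp.single n r) = Finsupp.single n r - Finsupp.single (n + 1) (t * r) := by
  simp [telescopeMap, Finsupp.smul_single]

theorem telescopeMap_apply_zero (c : ℕ →₀ R) : telescopeMap t c 0 = c 0 := by
  simp [telescopeMap, Finsupp.lmapDomain_apply,
    Finsupp.mapDomain_of_notMem_range _ _ (by simp : (0 : ℕ) ∉ Set.range Nat.succ)]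

theorem telescopeMap_apply_succ (c : ℕ →₀ R) (n : ℕ) :
    telescopeMap t c (n + 1) = c (n + 1) - t * c n := by
  simp [telescopeMap, Finsupp.lmapDomain_apply, Finsupp.mapDomain_apply Nat.succ_injective]

theorem telescopeMap_injective : Function.Injective (telescopeMap t) := by
  refine (injective_iff_map_eq_zero _).mpr fun c hc => Finsupp.ext fun n => ?_
  induction n with
  | zero => simpa [telescopeMap_apply_zero] using DFunLike.congr_fun hc 0
  | succ n ih => simpa [telescopeMap_apply_succ, ih] using DFunLike.congr_fun hc (n + 1)

theorem telescopeAugmentation_single (n : ℕ) (r : R) :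
    telescopeAugmentation t (Finsupp.single n r) = Localization.mk r (Submonoid.pow t n) := by
  simp [telescopeAugmentation, Localization.smul_mk]

theorem telescopeAugmentation_comp_telescopeMap :
    telescopeAugmentation t ∘ₗ telescopeMap t = 0 := by
  refine Finsupp.lhom_ext fun n r => ?_
  rw [LinearMap.comp_apply, telescopeMap_single, map_sub, telescopeAugmentation_single,
    telescopeAugmentation_single, LinearMap.zero_apply, sub_eq_zero, Localization.mk_eq_mk_iff,
    Localization.r_iff_exists]
  exact ⟨1, by simp only [OneMemClass.coe_one, Submonoid.pow_coe, one_mul]; ring⟩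

theorem telescopeAugmentation_surjective : Function.Surjective (telescopeAugmentation t) := by
  intro z
  induction z using Localization.induction_on with
  | H p =>
    obtain ⟨r, _, n, rfl⟩ := p
    exact ⟨Finsupp.single n r, telescopeAugmentation_single n r⟩

theorem single_sub_single_pow_mem_range (n k : ℕ) (r : R) :
    Finsupp.single n r - Finsupp.single (n + k) (t ^ k * r) ∈ LinearMap.range (telescopeMap t) := by
  induction k with
  | zero => simp
  | succ k ih =>
    have step := LinearMap.mem_range_self (telescopeMap t) (Finsupp.single (n + k) (t ^ k * r))
    rw [telescopeMap_single] at step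
    convert add_mem ih step using 1
    rw [← add_assoc, pow_succ', mul_assoc]
    abel

theorem exists_sub_single_mem_range (c : ℕ →₀ R) :
    ∃ N a, c - Finsupp.single N a ∈ LinearMap.range (telescopeMap t) := by
  induction c using Finsupp.induction with
  | zero => exact ⟨0, 0, by simp⟩
  | single_add n r c _ _ ih =>
    obtain ⟨N, a, hc⟩ := ih
    refine ⟨n + N, t ^ N * r + t ^ n * a, ?_⟩
    convert add_mem (single_sub_single_pow_mem_range (t := t) n N r)
      (add_mem hc (single_sub_single_pow_mem_range (t := t) N n a)) using 1
    rw [add_comm N n, Finsupp.single_add]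
    abel

theorem ker_telescopeAugmentation :
    LinearMap.ker (telescopeAugmentation t) = LinearMap.range (telescopeMap t) := by
  refine le_antisymm (fun c hc => ?_) (LinearMap.range_le_ker_iff.mpr
    telescopeAugmentation_comp_telescopeMap)
  obtain ⟨N, a, hN⟩ := exists_sub_single_mem_range (t := t) c
  have ha : Localization.mk a (Submonoid.pow t N) = 0 := by
    rw [← telescopeAugmentation_single, ← sub_sub_cancel c (Finsupp.single N a), map_sub,
      LinearMap.mem_ker.mp hc,
      LinearMap.range_le_ker_iff.mpr telescopeAugmentation_comp_telescopeMap hN, sub_zero]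
  rw [Localization.mk_eq_mk', IsLocalization.mk'_eq_zero_iff] at ha
  obtain ⟨⟨_, k, rfl⟩, hk⟩ := ha
  have hsingle := single_sub_single_pow_mem_range (t := t) N k a
  rw [show t ^ k * a = 0 from hk, Finsupp.single_zero, sub_zero] at hsingle
  simpa using add_mem hN hsingle

end Telescope

section Resolution

open Limits

variable {R : Type u} [CommRing R] (t : R)

noncomputable def telescopeComplex : ChainComplex (ModuleCat.{u} R) ℕ :=
  ChainComplex.of
    (fun n => match n with
      | 0 | 1 => ModuleCat.of R (ℕ →₀ R)
      | _ + 2 => ModuleCat.of R PUnit)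
    (fun n => match n with
      | 0 => ModuleCat.ofHom (telescopeMap t)
      | _ + 1 => 0)
    (fun _ => zero_comp)

instance (n : ℕ) : Projective ((telescopeComplex t).X n) :=
  match n with
  | 0 | 1 => ModuleCat.projective_of_free (ι := ℕ) Finsupp.basisSingleOne
  | _ + 2 => (ModuleCat.isZero_of_subsingleton (ModuleCat.of R PUnit)).projective

noncomputable def telescopeResolution :
    ProjectiveResolution (ModuleCat.of R (Localization.Away t)) where
  complex := telescopeComplex t
  π := (ChainComplex.toSingle₀Equiv _ _).symm
    ⟨ModuleCat.ofHom (telescopeAugmentation t),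
      congrArg ModuleCat.ofHom telescopeAugmentation_comp_telescopeMap⟩
  quasiIso := ⟨fun
    | 0 => by
      rw [ChainComplex.quasiIsoAt₀_iff,
        ShortComplex.quasiIso_iff_of_zeros' _ ((telescopeComplex t).shape 0 0 (by simp)) rfl rfl]
      exact ⟨(ShortComplex.moduleCat_exact_iff _).mpr fun _ hx => ker_telescopeAugmentation.le hx,
        (ModuleCat.epi_iff_surjective _).mpr telescopeAugmentation_surjective⟩
    | n + 1 => by
      rw [quasiIsoAt_iff_exactAt' _ _ (ChainComplex.exactAt_succ_single_obj _ _),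
        HomologicalComplex.exactAt_iff' _ (n + 2) (n + 1) n (by simp) (by simp)]
      cases n with
      | zero =>
        refine (ShortComplex.moduleCat_exact_iff _).mpr fun x hx => ⟨0, ?_⟩
        rw [map_zero]
        exact (telescopeMap_injective (hx.trans (map_zero _).symm)).symm
      | succ n =>
        exact ShortComplex.exact_of_isZero_X₂ _
          (ModuleCat.isZero_of_subsingleton (ModuleCat.of R PUnit))⟩

end Resolution

section Contramodule

open Limits

variable {R : Type u} [CommRing R] {t : R} {C : Type u} [AddCommGroup C] [Module R C]

theorem eq_zero_of_comp_telescopeMap_eq_zero (hC : ∀ f : Localization.Away t →ₗ[R] C, f = 0)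
    {φ : (ℕ →₀ R) →ₗ[R] C} (hφ : φ ∘ₗ telescopeMap t = 0) : φ = 0 := by
  have hker : LinearMap.ker (telescopeAugmentation t) ≤ LinearMap.ker φ := by
    rw [ker_telescopeAugmentation, LinearMap.range_le_ker_iff, hφ]
  have hf := hC ((LinearMap.ker (telescopeAugmentation t)).liftQ φ hker ∘ₗ
    (LinearMap.quotKerEquivOfSurjective _ telescopeAugmentation_surjective).symm.toLinearMap)
  ext n
  simpa using LinearMap.congr_fun hf (telescopeAugmentation t (Finsupp.single n 1))

theorem exists_comp_telescopeMap_eq (hC : Subsingleton (extM R (Localization.Away t) C 1))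
    (g : (ℕ →₀ R) →ₗ[R] C) : ∃ h : (ℕ →₀ R) →ₗ[R] C, h ∘ₗ telescopeMap t = g := by
  set K := (telescopeComplex t).linearYonedaObj R (ModuleCat.of R C)
  have : Subsingleton (K.homology 1) := (((telescopeResolution t).isoExt 1
    (ModuleCat.of R C)).toLinearEquiv.toEquiv.subsingleton_congr).mp hC
  have hK : IsZero (K.homology 1) := ModuleCat.isZero_of_subsingleton _
  have hex := (HomologicalComplex.exactAt_iff_isZero_homology K 1).mpr hK
  rw [HomologicalComplex.exactAt_iff' K 0 1 2 (by simp) (by simp),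
    ShortComplex.moduleCat_exact_iff] at hex
  obtain ⟨h, hh⟩ := hex (ModuleCat.ofHom g) (by
    change (telescopeComplex t).d 2 1 ≫ _ = 0
    exact zero_comp)
  exact ⟨h.hom, congrArg ModuleCat.Hom.hom hh⟩

theorem linearCombination_comp_telescopeMap (c : ℕ → C) :
    Finsupp.linearCombination R c ∘ₗ telescopeMap t =
      Finsupp.linearCombination R fun n => c n - t • c (n + 1) := by
  refine Finsupp.lhom_ext fun n r => ?_
  simp only [LinearMap.comp_apply, telescopeMap_single, map_sub, Finsupp.linearCombination_single,
    mul_smul, smul_sub, smul_comm r t]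

end Contramodule

section SeriesClosed

variable {R : Type u} [CommRing R] {t : R} {C : Type u} [AddCommGroup C] [Module R C]

namespace IsTContra

theorem eq_zero_of_tower (hC : IsTContra R t C) {c : ℕ → C} (hc : ∀ n, c n = t • c (n + 1)) :
    c = 0 := by
  have h := eq_zero_of_comp_telescopeMap_eq_zero hC.1 (φ := Finsupp.linearCombination R c) (by
    simp only [linearCombination_comp_telescopeMap, ← hc, sub_self]
    exact Finsupp.linearCombination_zero _ _ _)
  funext n
  simpa using LinearMap.congr_fun h (Finsupp.single n 1)

theorem exists_telescoping (hC : IsTContra R t C) (x : ℕ → C) :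
    ∃ b : ℕ → C, ∀ n, b n = x n + t • b (n + 1) := by
  obtain ⟨h, hh⟩ := exists_comp_telescopeMap_eq hC.2 (Finsupp.linearCombination R x)
  refine ⟨fun n => h (Finsupp.single n 1), fun n => ?_⟩
  have hn := LinearMap.congr_fun hh (Finsupp.single n 1)
  rw [LinearMap.comp_apply, telescopeMap_single, mul_one, map_sub,
    ← Finsupp.smul_single_one (n + 1) t, map_smul, Finsupp.linearCombination_single,
    one_smul] at hn
  rw [← hn, sub_add_cancel]

theorem telescoping_unique (hC : IsTContra R t C) {x b b' : ℕ → C}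
    (hb : ∀ n, b n = x n + t • b (n + 1)) (hb' : ∀ n, b' n = x n + t • b' (n + 1)) :
    b = b' :=
  sub_eq_zero.mp <| hC.eq_zero_of_tower fun n => by
    simp only [Pi.sub_apply, smul_sub]
    rw [hb n, hb' n]
    abel

end IsTContra

namespace Submodule

/-- `b n` plays the role of the `t`-adic series `∑ₖ tᵏ x (n + k)`. -/
def IsTSeriesClosed (t : R) (K : Submodule R C) : Prop :=
  ∀ x b : ℕ → C, (∀ n, x n ∈ K) → (∀ n, b n = x n + t • b (n + 1)) → ∀ n, b n ∈ K

theorem isTSeriesClosed_sInf {S : Set (Submodule R C)} (hS : ∀ K ∈ S, K.IsTSeriesClosed t) :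
    (sInf S).IsTSeriesClosed t := fun x b hx hb n =>
  mem_sInf.mpr fun K hK => hS K hK x b (fun n => mem_sInf.mp (hx n) K hK) hb n

theorem isTSeriesClosed_bot (hC : IsTContra R t C) : (⊥ : Submodule R C).IsTSeriesClosed t := by
  intro x b hx hb
  have hx : x = 0 := funext fun n => (mem_bot R).mp (hx n)
  simp only [hx, Pi.zero_apply, zero_add] at hb
  simp [hC.eq_zero_of_tower hb]

variable {K : Submodule R C}

theorem IsTSeriesClosed.smul (hC : IsTContra R t C) (hK : K.IsTSeriesClosed t) (a : R) :
    (a • K).IsTSeriesClosed t := by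
  intro x b hx hb n
  choose y hyK hy using fun n => (mem_smul_pointwise_iff_exists _ _ _).mp (hx n)
  obtain ⟨b', hb'⟩ := hC.exists_telescoping y
  have hab : b = fun n => a • b' n := hC.telescoping_unique hb fun n => by
    simp only [hb' n, smul_add, smul_comm t a, hy]
  rw [hab]
  exact smul_mem_pointwise_smul _ _ _ (hK y b' hyK hb' n)

theorem IsTSeriesClosed.sup (hC : IsTContra R t C) {L : Submodule R C}
    (hK : K.IsTSeriesClosed t) (hL : L.IsTSeriesClosed t) : (K ⊔ L).IsTSeriesClosed t := by
  intro x b hx hb n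
  choose y hy z hz hyz using fun n => mem_sup.mp (hx n)
  obtain ⟨c, hc⟩ := hC.exists_telescoping y
  have hbc : ∀ k, b k - c k = z k + t • (b (k + 1) - c (k + 1)) := fun k => by
    rw [hb k, hc k, ← hyz k, smul_sub]
    abel
  rw [← add_sub_cancel (c n) (b n)]
  exact add_mem_sup (hK y c hy hc n) (hL z _ hz hbc n)

theorem IsTSeriesClosed.span_smul (hC : IsTContra R t C) (hK : K.IsTSeriesClosed t)
    {S : Set R} (hS : S.Finite) : (Ideal.span S • K).IsTSeriesClosed t := by
  induction S, hS using Set.Finite.induction_on with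
  | empty => simpa using isTSeriesClosed_bot hC
  | @insert a S _ _ ih =>
    rw [Ideal.span_insert, sup_smul, ideal_span_singleton_smul]
    exact (hK.smul hC a).sup hC ih

theorem IsTSeriesClosed.le_of_le_smul_sup {D : Submodule R C} (hK : K.IsTSeriesClosed t)
    (hD : D ≤ t • D ⊔ K) : D ≤ K := by
  intro d hd
  have step : ∀ e : D, ∃ x ∈ K, ∃ e' : D, (e : C) = x + t • e' := fun e => by
    obtain ⟨u, hu, v, hv, huv⟩ := mem_sup.mp (hD e.2)
    obtain ⟨e', he', rfl⟩ := (mem_smul_pointwise_iff_exists _ _ _).mp hu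
    exact ⟨v, hv, ⟨e', he'⟩, by rw [← huv, add_comm]⟩
  choose x hx next hnext using step
  let e : ℕ → D := fun n => next^[n] ⟨d, hd⟩
  have he : ∀ n, (e n : C) = x (e n) + t • e (n + 1) := fun n => by
    simp only [e, Function.iterate_succ_apply']
    exact hnext _
  exact hK (fun n => x (e n)) (fun n => e n) (fun n => hx _) he 0

theorem eq_bot_of_le_span_smul {S : Set R} (hS : S.Finite) (hC : ∀ t ∈ S, IsTContra R t C)
    {D : Submodule R C} (hD : D ≤ Ideal.span S • D) : D = ⊥ := by
  induction S, hS using Set.Finite.induction_on generalizing D with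
  | empty => simpa using hD
  | @insert t S _ hS ih =>
    have htC := hC t (Set.mem_insert t S)
    rw [Ideal.span_insert, sup_smul, ideal_span_singleton_smul] at hD
    let K := sInf {K : Submodule R C | K.IsTSeriesClosed t ∧ Ideal.span S • D ≤ K}
    have hK : K.IsTSeriesClosed t := isTSeriesClosed_sInf fun _ h => h.1
    have hDK : D ≤ K :=
      hK.le_of_le_smul_sup (hD.trans (sup_le_sup_left (le_sInf fun _ h => h.2) _))
    have hKS : K ≤ Ideal.span S • K := sInf_le ⟨hK.span_smul htC hS, smul_mono_right _ hDK⟩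
    exact eq_bot_iff.mpr (hDK.trans (ih (fun s hs => hC s (Set.mem_insert_of_mem t hs)) hKS).le)

end Submodule

end SeriesClosed

/-- Let `R` be a commutative ring and `I = (s₁, …, s_m) ⊆ R` a finitely
generated ideal. Let `B` be an `R`-module with `B = IB` and `C` an `I`-contramodule
`R`-module. Then `Hom_R(B, C) = 0`; equivalently, an `I`-contramodule `R`-module has no
nonzero submodule `D` with `D = ID`. -/
theorem stmt17 (R : Type u) [CommRing R] (m : ℕ) (s : Fin m → R) (I : Ideal R)
    (hIs : I = Ideal.span (Set.range s))
    (B : Type u) [AddCommGroup B] [Module R B] (hB : I • (⊤ : Submodule R B) = ⊤)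
    (C : Type u) [AddCommGroup C] [Module R C] (hC : IsIdealContra R I C) :
    ∀ f : B →ₗ[R] C, f = 0 := by
  intro f
  have hrange : LinearMap.range f ≤ I • LinearMap.range f := by
    rw [LinearMap.range_eq_map, ← Submodule.map_smul'', hB]
  subst hIs
  exact LinearMap.range_eq_bot.mp <| Submodule.eq_bot_of_le_span_smul (Set.finite_range s)
    (fun t ht => hC t (Ideal.subset_span ht)) hrange
end

section
/- Let u : R → U be a flat epimorphism of commutative rings and I ⊆ R an ideal with IU = U. Then for any R-module D annihilated by I (i.e., any R/I-module), one has Ext^i_R(U, D) = 0 for all i ≥ 0; in particular, D is a u-contramodule. -/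
/-!
Multiplication makes `U` act on `Ext^i_R(U, D)` through the first argument. Since the left
derived functors of `Hom_R(-, D)` are additive, this action is a ring homomorphism
`U → End(Ext^i_R(U, D))`. An element `r ∈ I` acts through `r • id_U`, which `Hom_R(-, D)` kills
already on every term of a projective resolution, hence so do its derived functors. The kernel
of the action is therefore an ideal containing `IU = U`, so the identity of `Ext^i_R(U, D)` is
zero. The same argument applied to `Hom_R(-, D)` itself gives `Hom_R(U, D) = 0`.
-/

universe u

open CategoryTheory

open Limits

namespace CategoryTheory

section LeftDerived

variable {C D : Type*} [Category C] [Abelian C] [HasProjectiveResolutions C]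
  [Category D] [Abelian D]

instance projectiveResolutions_additive : (projectiveResolutions C).Additive where
  map_add {_ _ f g} :=
    (HomotopyCategory.eq_of_homotopy _ _ (ProjectiveResolution.liftHomotopy (f + g) _
      (ProjectiveResolution.lift f _ _ + ProjectiveResolution.lift g _ _)
      (by simp) (by simp))).trans (Functor.map_add _)

instance Functor.leftDerived_additive (F : C ⥤ D) [F.Additive] (n : ℕ) :
    (F.leftDerived n).Additive := by
  unfold Functor.leftDerived Functor.leftDerivedToHomotopyCategory
  infer_instance

theorem Functor.leftDerived_map_smul_id_eq_zero {R : Type*} [Ring R]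
    [CategoryTheory.Linear R C] (F : C ⥤ D) [F.Additive] {r : R}
    (hF : ∀ X : C, F.map (r • 𝟙 X) = 0) (n : ℕ) (X : C) :
    (F.leftDerived n).map (r • 𝟙 X) = 0 := by
  let P := projectiveResolution X
  -- `P.π.f 0` lands in `(single₀ X).X 0`, which is only defeq to `X`, so `rw` cannot close this.
  have comm : (r • 𝟙 P.complex).f 0 ≫ P.π.f 0 = P.π.f 0 ≫ (r • 𝟙 X) := by
    rw [HomologicalComplex.smul_f_apply, HomologicalComplex.id_f, Linear.smul_comp,
      Category.id_comp]
    exact ((Linear.comp_smul _ _ _ _ r _).trans (congrArg (r • ·) (Category.comp_id _))).symm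
  have h := ProjectiveResolution.isoLeftDerivedObj_hom_naturality _ P P _ comm F n
  have hP : (F.mapHomologicalComplex _).map (r • 𝟙 P.complex) = 0 := by
    ext i
    exact hF _
  rw [Functor.comp_map, hP, Functor.map_zero, comp_zero, ← zero_comp] at h
  exact (cancel_mono _).1 h

end LeftDerived

def Functor.mapEndRingHom {C D : Type*} [Category C] [Preadditive C] [Category D]
    [Preadditive D] (G : C ⥤ D) [G.Additive] (X : C) : End X →+* End (G.obj X) :=
  { G.mapEnd X with
    map_zero' := G.map_zero X X
    map_add' := fun _ _ => G.map_add }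

end CategoryTheory

namespace ModuleCat

variable {R : Type u} [CommRing R]

theorem linearYoneda_map_smul_id_eq_zero {N : ModuleCat.{u} R} {r : R}
    (hr : ∀ x : N, r • x = 0) (X : ModuleCat.{u} R) :
    ((linearYoneda R (ModuleCat.{u} R)).obj N).map (r • 𝟙 X).op = 0 := by
  ext (f : X ⟶ N)
  change (r • 𝟙 X) ≫ f = 0
  rw [Linear.smul_comp, Category.id_comp]
  ext x
  exact hr (f.hom x)

theorem isZero_obj_of_map_smul_id_eq_zero {U : Type u} [CommRing U] [Algebra R U]
    {D : Type*} [Category D] [Preadditive D] (G : ModuleCat.{u} R ⥤ D) [G.Additive]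
    {I : Ideal R} (hI : I.map (algebraMap R U) = ⊤)
    (hG : ∀ r ∈ I, G.map (r • 𝟙 (ModuleCat.of R U)) = 0) :
    IsZero (G.obj (ModuleCat.of R U)) := by
  let act : U →+* End (G.obj (ModuleCat.of R U)) :=
    (G.mapEndRingHom _).comp
      ((endRingEquiv _).symm.toRingHom.comp (Algebra.lmul R U).toRingHom)
  have hker : I.map (algebraMap R U) ≤ RingHom.ker act := by
    refine Ideal.map_le_iff_le_comap.2 fun r hr => ?_
    rw [Ideal.mem_comap, RingHom.mem_ker, ← hG r hr]
    exact congrArg G.map (ModuleCat.hom_ext (LinearMap.ext fun x => (Algebra.smul_def r x).symm))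
  rw [hI, top_le_iff] at hker
  rw [IsZero.iff_id_eq_zero, ← End.one_def, ← map_one act]
  exact RingHom.mem_ker.1 (hker ▸ Submodule.mem_top)

end ModuleCat

theorem stmt18_general (R U : Type u) [CommRing R] [CommRing U] [Algebra R U]
    (I : Ideal R) (hI : Ideal.map (algebraMap R U) I = ⊤)
    (D : Type u) [AddCommGroup D] [Module R D] (hD : ∀ r ∈ I, ∀ x : D, r • x = 0) :
    (∀ i : ℕ, Subsingleton (extM R U D i)) ∧ (∀ f : U →ₗ[R] D, f = 0) := by
  let F := ((linearYoneda R (ModuleCat.{u} R)).obj (ModuleCat.of R D)).rightOp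
  have hF : ∀ r ∈ I, ∀ X, F.map (r • 𝟙 X) = 0 := fun r hr X =>
    congrArg Quiver.Hom.op (ModuleCat.linearYoneda_map_smul_id_eq_zero (hD r hr) X)
  refine ⟨fun i => ?_, fun f => ?_⟩
  · have hExt := ModuleCat.isZero_obj_of_map_smul_id_eq_zero (F.leftDerived i) hI
      fun r hr => F.leftDerived_map_smul_id_eq_zero (hF r hr) i _
    exact ModuleCat.isZero_iff_subsingleton.1 hExt.unop
  · have hHom := ModuleCat.isZero_obj_of_map_smul_id_eq_zero F hI fun r hr => hF r hr _
    have hf : ModuleCat.ofHom f = 0 := (ModuleCat.isZero_iff_subsingleton.1 hHom.unop).elim _ _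
    exact congrArg ModuleCat.Hom.hom hf

/-- Let `u : R → U` be a flat epimorphism of commutative rings (here
`u = algebraMap R U`) and `I ⊆ R` an ideal with `IU = U`. Then for any `R`-module `D`
annihilated by `I` (i.e. any `R/I`-module), one has `Ext^i_R(U, D) = 0` for all `i ≥ 0`;
in particular `Hom_R(U, D) = 0`, so `D` is a `u`-contramodule. -/
theorem stmt18 (R U : Type u) [CommRing R] [CommRing U] [Algebra R U]
    (hflat : Module.Flat R U) (hepi : IsRingEpi R U)
    (I : Ideal R) (hI : Ideal.map (algebraMap R U) I = ⊤)
    (D : Type u) [AddCommGroup D] [Module R D] (hD : ∀ r ∈ I, ∀ x : D, r • x = 0) :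
    (∀ i : ℕ, Subsingleton (extM R U D i)) ∧ (∀ f : U →ₗ[R] D, f = 0) :=
  stmt18_general R U I hI D hD
end
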